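/- arXiv:2108.07036 — 3 statements merged into one kernel-verified Lean document; each statement's English description precedes it below -/
import Mathlib

section
/- If p : ℝ → ℝ is a differentiable, nonnegative function satisfying p'(x) + ((1-e^{-x})/(1+e^{-x}))p(x) = 0 for all x ∈ ℝ and ∫_{-∞}^{∞} p(x) dx = 1, then p(x) = e^{-x}/(1+e^{-x})^2 for all x. -/
/-!
Write `σ` for the sigmoid `x ↦ (1 + e^{-x})⁻¹`. The coefficient of the ODE is `2σ - 1`, and the
logistic density `L = σ' = σ(1 - σ)` solves `L' = -(2σ - 1) L` and is positive. Two solutions of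
the same first-order linear ODE have a quotient with zero derivative, so `p = c L`. Finally
`∫ L = lim_{+∞} σ - lim_{-∞} σ = 1` forces `c = 1`.
-/

open Real MeasureTheory Filter Topology

theorem eq_const_mul_of_hasDerivAt_mul {𝕜 : Type*} [RCLike 𝕜] {a f g : 𝕜 → 𝕜}
    (hf : ∀ x, HasDerivAt f (a x * f x) x) (hg : ∀ x, HasDerivAt g (a x * g x) x)
    (hg0 : ∀ x, g x ≠ 0) : ∃ c, ∀ x, f x = c * g x := by
  have hquot : ∀ x, HasDerivAt (f / g) 0 x := fun x =>
    ((hf x).div (hg x) (hg0 x)).congr_deriv (by ring)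
  refine ⟨f 0 / g 0, fun x => ?_⟩
  have := is_const_of_deriv_eq_zero (fun y => (hquot y).differentiableAt)
    (fun y => (hquot y).deriv) x 0
  rw [Pi.div_apply, Pi.div_apply] at this
  rw [← this, div_mul_cancel₀ _ (hg0 x)]

noncomputable def logisticDensity (x : ℝ) : ℝ := exp (-x) / (1 + exp (-x)) ^ 2

theorem logisticDensity_eq_sigmoid_mul (x : ℝ) :
    logisticDensity x = sigmoid x * (1 - sigmoid x) := by
  have : 1 + exp (-x) ≠ 0 := by positivity
  rw [logisticDensity, sigmoid_def]
  field_simp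
  ring

theorem logisticDensity_pos (x : ℝ) : 0 < logisticDensity x := by
  unfold logisticDensity
  positivity

theorem two_mul_sigmoid_sub_one (x : ℝ) :
    2 * sigmoid x - 1 = (1 - exp (-x)) / (1 + exp (-x)) := by
  have : 1 + exp (-x) ≠ 0 := by positivity
  rw [sigmoid_def]
  field_simp
  ring

theorem hasDerivAt_sigmoid_logisticDensity (x : ℝ) :
    HasDerivAt sigmoid (logisticDensity x) x := by
  simpa only [logisticDensity_eq_sigmoid_mul] using hasDerivAt_sigmoid x

theorem hasDerivAt_logisticDensity (x : ℝ) :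
    HasDerivAt logisticDensity (-(2 * sigmoid x - 1) * logisticDensity x) x := by
  have hσ := hasDerivAt_sigmoid_logisticDensity x
  have hprod := hσ.fun_mul (hσ.const_sub 1)
  rw [← funext logisticDensity_eq_sigmoid_mul] at hprod
  exact hprod.congr_deriv (by rw [logisticDensity_eq_sigmoid_mul]; ring)

theorem integral_logisticDensity (h : Integrable logisticDensity) :
    ∫ x, logisticDensity x = 1 := by
  simpa using integral_of_hasDerivAt_of_tendsto hasDerivAt_sigmoid_logisticDensity h
    tendsto_sigmoid_atBot tendsto_sigmoid_atTop

theorem logistic_density_unique_general (p : ℝ → ℝ)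
    (hdiff : Differentiable ℝ p)
    (hode : ∀ x, deriv p x + ((1 - Real.exp (-x)) / (1 + Real.exp (-x))) * p x = 0)
    (hint : ∫ x : ℝ, p x = 1) :
    ∀ x, p x = Real.exp (-x) / (1 + Real.exp (-x))^2 := by
  have hp : ∀ x, HasDerivAt p (-(2 * sigmoid x - 1) * p x) x := fun x =>
    (hdiff x).hasDerivAt.congr_deriv (by rw [two_mul_sigmoid_sub_one]; linarith [hode x])
  obtain ⟨c, hc⟩ := eq_const_mul_of_hasDerivAt_mul hp hasDerivAt_logisticDensity
    (fun x => (logisticDensity_pos x).ne')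
  have hcL : c * ∫ x, logisticDensity x = 1 := by
    rw [← integral_const_mul, ← hint]
    simp only [hc]
  -- a non-integrable function has Bochner integral `0`, so `c * ∫ L = 1` makes `L` integrable
  have hL := integral_logisticDensity (.of_integral_ne_zero (right_ne_zero_of_mul_eq_one hcL))
  rw [hL, mul_one] at hcL
  intro x
  rw [hc x, hcL, one_mul, logisticDensity]

theorem logistic_density_unique (p : ℝ → ℝ)
    (hdiff : Differentiable ℝ p) (hpos : ∀ x, 0 ≤ p x)
    (hode : ∀ x, deriv p x + ((1 - Real.exp (-x)) / (1 + Real.exp (-x))) * p x = 0)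
    (hint : ∫ x : ℝ, p x = 1) :
    ∀ x, p x = Real.exp (-x) / (1 + Real.exp (-x))^2 :=
  logistic_density_unique_general p hdiff hode hint
end

section
/- If X is a random variable with the standard logistic distribution (density p(x) = e^{-x}/(1+e^{-x})^2), then for every t ∈ ℝ, E[(i t − (1−e^{−X})/(1+e^{−X}))·e^{i t X}] = 0. -/
/-!
The logistic density is `p = σ (1 - σ)`, the derivative of the sigmoid `σ`, so it is integrable,
and it satisfies `p' = -s p` for the bounded score `s = 2σ - 1 = (1 - e⁻ˣ) / (1 + e⁻ˣ)`.
Hence the integrand is the derivative of the integrable function `x ↦ e^{itx} p x`, and the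
integral of an integrable derivative of an integrable function on `ℝ` vanishes.
-/

open MeasureTheory Real Filter

theorem integrable_deriv_of_nonneg_of_abs_le {g g' : ℝ → ℝ} {C : ℝ}
    (hderiv : ∀ x, HasDerivAt g (g' x) x) (hg' : ∀ x, 0 ≤ g' x) (hg : ∀ x, |g x| ≤ C) :
    Integrable g' := by
  have hcont : Continuous g := continuous_iff_continuousAt.2 fun x => (hderiv x).continuousAt
  have hint (a b : ℝ) : IntervalIntegrable g' volume a b :=
    intervalIntegral.intervalIntegrable_deriv_of_nonneg hcont.continuousOn
      (fun x _ => hderiv x) (fun x _ => hg' x)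
  refine integrable_of_intervalIntegral_norm_bounded (2 * C) (l := atTop)
    (fun n : ℕ => (hint (-n) n).1) (tendsto_neg_atTop_atBot.comp tendsto_natCast_atTop_atTop)
    tendsto_natCast_atTop_atTop (Eventually.of_forall fun n => ?_)
  simp_rw [Real.norm_of_nonneg (hg' _)]
  rw [intervalIntegral.integral_eq_sub_of_hasDerivAt (fun x _ => hderiv x) (hint _ _)]
  linarith [abs_le.1 (hg n), abs_le.1 (hg (-n))]

theorem integral_stein_mul_exp_eq_zero {p s : ℝ → ℝ} {C : ℝ}
    (hp : ∀ x, HasDerivAt p (-(s x * p x)) x) (hs : ∀ x, |s x| ≤ C) (hint : Integrable p)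
    (t : ℝ) :
    ∫ x : ℝ, (Complex.I * t - (s x : ℂ)) * Complex.exp (Complex.I * t * x) * (p x : ℂ) = 0 := by
  set g : ℝ → ℂ := fun x => Complex.exp (Complex.I * t * x) * (p x : ℂ)
  have hg (x : ℝ) : HasDerivAt g
      ((Complex.I * t - (s x : ℂ)) * Complex.exp (Complex.I * t * x) * (p x : ℂ)) x := by
    have he : HasDerivAt (fun y : ℝ => Complex.exp (Complex.I * t * y))
        (Complex.exp (Complex.I * t * x) * (Complex.I * t)) x := by
      simpa using ((hasDerivAt_id x).ofReal_comp.const_mul (Complex.I * t)).cexp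
    refine (he.mul (hp x).ofReal_comp).congr_deriv ?_
    push_cast
    ring
  have hnorm_exp (x : ℝ) : ‖Complex.exp (Complex.I * t * x)‖ = 1 := by
    rw [Complex.norm_exp]; simp
  refine integral_eq_zero_of_hasDerivAt_of_integrable hg ?_ ?_
  · refine (hint.norm.const_mul (‖Complex.I * t‖ + C)).mono'
      -- a derivative is measurable, although `s` need not be
      (by rw [← funext fun x => (hg x).deriv]; exact (measurable_deriv g).aestronglyMeasurable)
      (Eventually.of_forall fun x => ?_)
    rw [norm_mul, norm_mul, hnorm_exp, mul_one, Complex.norm_real]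
    refine mul_le_mul_of_nonneg_right ((norm_sub_le _ _).trans (add_le_add_right ?_ _))
      (norm_nonneg _)
    simpa using hs x
  · exact hint.ofReal.bdd_mul (by fun_prop) (Eventually.of_forall fun x => (hnorm_exp x).le)

theorem exp_neg_div_one_add_exp_neg_sq (x : ℝ) :
    exp (-x) / (1 + exp (-x)) ^ 2 = sigmoid x * (1 - sigmoid x) := by
  rw [sigmoid_def]
  field_simp
  ring

theorem one_sub_exp_neg_div_one_add_exp_neg (x : ℝ) :
    (1 - exp (-x)) / (1 + exp (-x)) = 2 * sigmoid x - 1 := by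
  rw [sigmoid_def]
  field_simp
  ring

theorem abs_two_mul_sigmoid_sub_one_le (x : ℝ) : |2 * sigmoid x - 1| ≤ 1 := by
  rw [abs_le]
  constructor <;> linarith [sigmoid_pos x, sigmoid_lt_one x]

theorem hasDerivAt_sigmoid_mul_one_sub_sigmoid (x : ℝ) :
    HasDerivAt (fun y => sigmoid y * (1 - sigmoid y))
      (-((2 * sigmoid x - 1) * (sigmoid x * (1 - sigmoid x)))) x := by
  refine ((hasDerivAt_sigmoid x).mul ((hasDerivAt_sigmoid x).const_sub 1)).congr_deriv ?_
  ring

theorem integrable_sigmoid_mul_one_sub_sigmoid :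
    Integrable fun x => sigmoid x * (1 - sigmoid x) :=
  integrable_deriv_of_nonneg_of_abs_le hasDerivAt_sigmoid
    (fun x => mul_nonneg (sigmoid_nonneg x) (sub_nonneg.2 (sigmoid_le_one x)))
    (fun x => abs_le.2 ⟨by linarith [sigmoid_nonneg x], sigmoid_le_one x⟩)

theorem logistic_stein_identity (t : ℝ) :
    ∫ x : ℝ, (Complex.I * t - (((1 - Real.exp (-x)) / (1 + Real.exp (-x)) : ℝ) : ℂ)) *
        Complex.exp (Complex.I * t * x) *
        ((Real.exp (-x) / (1 + Real.exp (-x))^2 : ℝ) : ℂ) = 0 := by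
  simp_rw [exp_neg_div_one_add_exp_neg_sq, one_sub_exp_neg_div_one_add_exp_neg]
  exact integral_stein_mul_exp_eq_zero (p := fun y => sigmoid y * (1 - sigmoid y))
    (s := fun y => 2 * sigmoid y - 1) hasDerivAt_sigmoid_mul_one_sub_sigmoid
    abs_two_mul_sigmoid_sub_one_le integrable_sigmoid_mul_one_sub_sigmoid t
end

section
/- For X with standard logistic density, E[|X|·e^{-2X}/(1+e^{-X})^2] = (2 log 2)/3 + 1/12; equivalently, ∫_{-∞}^{∞} |x|·e^{-3x}/(1+e^{-x})^4 dx = (2 log 2)/3 + 1/12. -/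
/-!
Write `σ` for the logistic sigmoid; `σ x * exp (-x) = σ (-x)` turns the integrand into
`|x| σ(x) σ(-x)³`. Since `σ' = σ · σ(-·)`, the function `x σ(x) σ(-x)³` has the elementary
primitive `F x = (log σ(x) - x σ(-x)³ + σ(-x) + σ(-x)² / 2) / 3`. Splitting `ℝ` at `0`,
`∫ |x| g x = F(+∞) + F(-∞) - 2 F(0)` whenever `F' = x g` with `g ≥ 0`, and here `F(+∞) = 0`,
`F(-∞) = 1/2`, `F(0) = (5/8 - log 2) / 3`.
-/

open Real MeasureTheory Set Filter Topology

theorem integral_eq_integral_Ioi_add_integral_Ioi_comp_neg {E : Type*} [NormedAddCommGroup E]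
    [NormedSpace ℝ E] {f : ℝ → E} (hf : IntegrableOn f (Ioi 0))
    (hf_neg : IntegrableOn (fun x => f (-x)) (Ioi 0)) :
    ∫ x, f x = (∫ x in Ioi 0, f x) + ∫ x in Ioi 0, f (-x) := by
  have hIic : IntegrableOn f (Iic 0) := by
    rw [← (Measure.measurePreserving_neg volume).integrableOn_comp_preimage
      (Homeomorph.neg ℝ).measurableEmbedding]
    simpa [Function.comp_def, integrableOn_Ici_iff_integrableOn_Ioi] using hf_neg
  rw [integral_comp_neg_Ioi, neg_zero, add_comm, intervalIntegral.integral_Iic_add_Ioi hIic hf]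

section AbsMoment

variable {F g : ℝ → ℝ} {l l' : ℝ}

theorem integrableOn_Ioi_abs_mul_of_hasDerivAt (hF : ∀ x, HasDerivAt F (x * g x) x)
    (hg : ∀ x, 0 ≤ g x) (hl : Tendsto F atTop (𝓝 l)) :
    IntegrableOn (fun x => |x| * g x) (Ioi 0) := by
  refine (integrableOn_Ioi_deriv_of_nonneg' (fun x _ => hF x)
    (fun x hx => mul_nonneg (le_of_lt hx) (hg x)) hl).congr_fun (fun x hx => ?_) measurableSet_Ioi
  rw [abs_of_pos hx]

theorem integral_Ioi_abs_mul_of_hasDerivAt (hF : ∀ x, HasDerivAt F (x * g x) x)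
    (hg : ∀ x, 0 ≤ g x) (hl : Tendsto F atTop (𝓝 l)) :
    ∫ x in Ioi 0, |x| * g x = l - F 0 := by
  rw [← integral_Ioi_of_hasDerivAt_of_nonneg' (fun x _ => hF x)
    (fun x hx => mul_nonneg (le_of_lt hx) (hg x)) hl]
  exact setIntegral_congr_fun measurableSet_Ioi fun x hx => by rw [abs_of_pos hx]

theorem integral_abs_mul_of_hasDerivAt (hF : ∀ x, HasDerivAt F (x * g x) x)
    (hg : ∀ x, 0 ≤ g x) (hl : Tendsto F atTop (𝓝 l)) (hl' : Tendsto F atBot (𝓝 l')) :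
    ∫ x, |x| * g x = l + l' - 2 * F 0 := by
  have hF_neg (x : ℝ) : HasDerivAt (fun x => F (-x)) (x * g (-x)) x := by
    simpa [Function.comp_def] using (hF (-x)).scomp x (hasDerivAt_neg x)
  have hl_neg : Tendsto (fun x => F (-x)) atTop (𝓝 l') := hl'.comp tendsto_neg_atTop_atBot
  have hg_neg (x : ℝ) : 0 ≤ g (-x) := hg (-x)
  have hsplit := integral_eq_integral_Ioi_add_integral_Ioi_comp_neg
    (integrableOn_Ioi_abs_mul_of_hasDerivAt hF hg hl)
    (by simpa using integrableOn_Ioi_abs_mul_of_hasDerivAt hF_neg hg_neg hl_neg)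
  simp only [abs_neg] at hsplit
  rw [hsplit, integral_Ioi_abs_mul_of_hasDerivAt hF hg hl,
    integral_Ioi_abs_mul_of_hasDerivAt hF_neg hg_neg hl_neg, neg_zero]
  ring

end AbsMoment

theorem exp_neg_three_mul_div_one_add_exp_neg_pow_four (x : ℝ) :
    exp (-3 * x) / (1 + exp (-x)) ^ 4 = sigmoid x * sigmoid (-x) ^ 3 := by
  rw [← sigmoid_mul_rexp_neg, sigmoid_def, show -3 * x = (3 : ℕ) * -x by push_cast; ring,
    exp_nat_mul]
  field_simp

theorem log_sigmoid_neg (x : ℝ) : log (sigmoid (-x)) = log (sigmoid x) - x := by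
  rw [← sigmoid_mul_rexp_neg, log_mul (sigmoid_pos x).ne' (exp_pos _).ne', log_exp,
    sub_eq_add_neg]

theorem tendsto_mul_sigmoid_neg_atTop : Tendsto (fun x => x * sigmoid (-x)) atTop (𝓝 0) := by
  have h := (tendsto_pow_mul_exp_neg_atTop_nhds_zero 1).mul tendsto_sigmoid_atTop
  rw [zero_mul] at h
  refine h.congr fun x => ?_
  rw [← sigmoid_mul_rexp_neg, pow_one]
  ring

noncomputable def logisticPrimitive (x : ℝ) : ℝ :=
  (log (sigmoid x) - x * sigmoid (-x) ^ 3 + sigmoid (-x) + sigmoid (-x) ^ 2 / 2) / 3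

theorem hasDerivAt_logisticPrimitive (x : ℝ) :
    HasDerivAt logisticPrimitive (x * (sigmoid x * sigmoid (-x) ^ 3)) x := by
  have hs := hasDerivAt_sigmoid x
  have ht : HasDerivAt (fun x => sigmoid (-x)) (-(sigmoid (-x) * sigmoid x)) x := by
    simpa [Function.comp_def, sigmoid_neg] using
      (hasDerivAt_sigmoid (-x)).scomp x (hasDerivAt_neg x)
  have hs₀ : sigmoid x ≠ 0 := (sigmoid_pos x).ne'
  refine (((((hs.log hs₀).sub ((hasDerivAt_id x).mul (ht.pow 3))).add ht).add
    ((ht.pow 2).div_const 2)).div_const 3).congr_deriv ?_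
  simp only [Pi.pow_apply, id, sigmoid_neg x]
  field_simp
  ring

theorem tendsto_log_sigmoid_atTop : Tendsto (fun x => log (sigmoid x)) atTop (𝓝 0) := by
  simpa [Function.comp_def] using (continuousAt_log one_ne_zero).tendsto.comp tendsto_sigmoid_atTop

theorem tendsto_logisticPrimitive_atTop : Tendsto logisticPrimitive atTop (𝓝 0) := by
  have ht : Tendsto (fun x => sigmoid (-x)) atTop (𝓝 0) :=
    tendsto_sigmoid_atBot.comp tendsto_neg_atTop_atBot
  have := (((tendsto_log_sigmoid_atTop.sub (tendsto_mul_sigmoid_neg_atTop.mul (ht.pow 2))).add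
    ht).add ((ht.pow 2).div_const 2)).div_const 3
  convert this using 2
  · rw [logisticPrimitive]
    ring
  · norm_num

/-- At `-∞` the divergent terms `log σ(x)` and `x σ(-x)³` of `logisticPrimitive` cancel. -/
theorem logisticPrimitive_neg (x : ℝ) :
    logisticPrimitive (-x) = (log (sigmoid x) - x * sigmoid (-x) * (1 + sigmoid x + sigmoid x ^ 2)
      + sigmoid x + sigmoid x ^ 2 / 2) / 3 := by
  rw [logisticPrimitive, neg_neg, log_sigmoid_neg, sigmoid_neg x]
  ring

theorem tendsto_logisticPrimitive_atBot : Tendsto logisticPrimitive atBot (𝓝 (1 / 2)) := by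
  have hs := tendsto_sigmoid_atTop
  have := (((tendsto_log_sigmoid_atTop.sub (tendsto_mul_sigmoid_neg_atTop.mul
    ((hs.const_add 1).add (hs.pow 2)))).add hs).add ((hs.pow 2).div_const 2)).div_const 3
  have h : Tendsto (fun x => logisticPrimitive (-x)) atTop (𝓝 (1 / 2)) := by
    convert this using 2
    · rw [logisticPrimitive_neg]
    · norm_num
  simpa [Function.comp_def] using h.comp tendsto_neg_atBot_atTop

theorem logisticPrimitive_zero : logisticPrimitive 0 = (5 / 8 - log 2) / 3 := by
  rw [logisticPrimitive, neg_zero, sigmoid_zero, log_inv]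
  ring

theorem logistic_abs_moment_two :
    ∫ x : ℝ, |x| * Real.exp (-3*x) / (1 + Real.exp (-x))^4 = 2 * Real.log 2 / 3 + 1/12 := by
  simp_rw [mul_div_assoc, exp_neg_three_mul_div_one_add_exp_neg_pow_four]
  rw [integral_abs_mul_of_hasDerivAt hasDerivAt_logisticPrimitive
    (fun x => mul_nonneg (sigmoid_nonneg x) (pow_nonneg (sigmoid_nonneg _) 3))
    tendsto_logisticPrimitive_atTop tendsto_logisticPrimitive_atBot, logisticPrimitive_zero]
  ring
end
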